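/- Let P_𝔫 be a Q-symmetric positive-definite endomorphism of 𝔫 commuting with ad(k)|_𝔫 for every k ∈ 𝔨, and set P = 0 ⊕ P_𝔫. Then the extended curvature satisfies: (i) Rm(P)(T, V).T' = 0 for all T, T' ∈ 𝔱 and V ∈ 𝔪; (ii) Rm(P)(X, V).T' = 0 for all X ∈ 𝔫, T' ∈ 𝔱 and V ∈ 𝔪; (iii) π_𝔫(Rm(P)(X, Y).Z) = Rm_N(P_𝔫)(X, Y).Z for all X, Y, Z ∈ 𝔫, where π_𝔫 is the Q-orthogonal projection onto 𝔫. -/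

import Mathlib

/-! With `P_𝔱 = 0`, `S(P)(V).W` depends on `W` only through `W_𝔫`, so `S(P)` kills `𝔱`, and
(i), (ii) reduce to `[𝔥, 𝔱] ⊆ 𝔥 ∩ 𝔥ᗮ = 0`. On `𝔫`, ad-invariance of `Q` and the symmetry of `P_𝔫`
solve the implicit equation defining `S_N`, which gives
`π_𝔫 (S(P)(V).W) = -[V_𝔱, W_𝔫] + S_N(V_𝔫).W_𝔫`. Applied twice, this turns `π_𝔫 ∘ Rm(P)(X,Y)` into
`Rm_N(X,Y)`, the `𝔥`- and `𝔱`-components of `[X,Y]` recombining into `[X,Y]_𝔨`. -/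

open scoped RealInnerProductSpace

noncomputable section

variable {G : Type*} [NormedAddCommGroup G] [InnerProductSpace ℝ G] [FiniteDimensional ℝ G]

/-- Orthogonal projection onto the subspace `W`, as a plain map `G → G`. -/
def pr (W : Submodule ℝ G) : G → G := fun v => (W.orthogonalProjectionOnto v : G)

/-- Orthogonal projection onto the subspace `W`, as a continuous linear endomorphism of `G`. -/
def projL (W : Submodule ℝ G) : G →L[ℝ] G := W.subtypeL.comp W.orthogonalProjectionOnto

variable (br : G →ₗ[ℝ] G →ₗ[ℝ] G)

/-- `br` is a Lie bracket making `G` a real Lie algebra, and the inner product `Q` of `G`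
is ad-invariant: `Q([Z,X],Y) + Q(X,[Z,Y]) = 0`. -/
structure IsLieQ : Prop where
  alt : ∀ x : G, br x x = 0
  jacobi : ∀ x y z : G, br x (br y z) + br y (br z x) + br z (br x y) = 0
  adInv : ∀ Z X Y : G, ⟪br Z X, Y⟫ + ⟪X, br Z Y⟫ = 0

/-- `𝔥 ⊆ 𝔨` are Lie subalgebras of `𝔤` with `[𝔨,𝔨] ⊆ 𝔥`. -/
structure IsToralPair (𝔥 𝔨 : Submodule ℝ G) : Prop where
  subalg_h : ∀ x ∈ 𝔥, ∀ y ∈ 𝔥, br x y ∈ 𝔥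
  subalg_k : ∀ x ∈ 𝔨, ∀ y ∈ 𝔨, br x y ∈ 𝔨
  h_le_k : 𝔥 ≤ 𝔨
  bk_in_h : ∀ x ∈ 𝔨, ∀ y ∈ 𝔨, br x y ∈ 𝔥

/-- no nonzero element of `𝔫 = 𝔨ᗮ` commutes with all of `𝔨`. -/
def NoTrivial (𝔨 : Submodule ℝ G) : Prop :=
  ∀ X ∈ 𝔨ᗮ, (∀ k ∈ 𝔨, br k X = 0) → X = 0

/-- `A` maps `W` into itself and is `Q`-symmetric on `W`. -/
def SymOn (W : Submodule ℝ G) (A : G →L[ℝ] G) : Prop :=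
  (∀ v ∈ W, A v ∈ W) ∧ ∀ v ∈ W, ∀ w ∈ W, ⟪A v, w⟫ = ⟪v, A w⟫

/-- `A` is positive definite on the subspace `W`. -/
def PosDefOn (W : Submodule ℝ G) (A : G →L[ℝ] G) : Prop :=
  ∀ v ∈ W, v ≠ 0 → 0 < ⟪A v, v⟫

/-- `A` commutes with `ad(k)|_𝔫` on `𝔫 = 𝔨ᗮ`, for every `k ∈ 𝔨`. -/
def CommAd (𝔨 : Submodule ℝ G) (A : G →L[ℝ] G) : Prop :=
  ∀ k ∈ 𝔨, ∀ X ∈ 𝔨ᗮ, A (br k X) = br k (A X)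

/-- `Ainv` maps `W` to itself and is a two-sided inverse of `A` on the subspace `W`. -/
def InvOn' (W : Submodule ℝ G) (A Ainv : G →L[ℝ] G) : Prop :=
  (∀ v ∈ W, Ainv v ∈ W) ∧ (∀ v ∈ W, Ainv (A v) = v) ∧ (∀ v ∈ W, A (Ainv v) = v)

/-- The explicit formula for the extended operator `S(P)(V).W` of the generalized submersion
metric `P = P_𝔱 ⊕ P_𝔫`, where `𝔱 = 𝔨 ⊓ 𝔥ᗮ`, `𝔪 = 𝔥ᗮ`, `𝔫 = 𝔨ᗮ`:
`S(P)(T).T' = 0`, `S(P)(T).Y = -[T,Y] + (1/2) P_𝔫⁻¹.[P_𝔱.T, Y]`,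
`S(P)(X).T' = -(1/2) P_𝔫⁻¹.[X, P_𝔱.T']`,
`S(P)(X).Y = -(1/2)[X,Y]_𝔪 - (1/2) P_𝔫⁻¹.(([X,P_𝔫.Y])_𝔫 - ([P_𝔫.X,Y])_𝔫)`. -/
def Sfun (𝔥 𝔨 : Submodule ℝ G) (pt pn pninv : G →L[ℝ] G) (V W : G) : G :=
  -(br (pr (𝔨 ⊓ 𝔥ᗮ) V) (pr 𝔨ᗮ W)) + (2⁻¹ : ℝ) • pninv (br (pt (pr (𝔨 ⊓ 𝔥ᗮ) V)) (pr 𝔨ᗮ W))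
    - (2⁻¹ : ℝ) • pninv (br (pr 𝔨ᗮ V) (pt (pr (𝔨 ⊓ 𝔥ᗮ) W)))
    - (2⁻¹ : ℝ) • pr 𝔥ᗮ (br (pr 𝔨ᗮ V) (pr 𝔨ᗮ W))
    - (2⁻¹ : ℝ) • pninv (pr 𝔨ᗮ (br (pr 𝔨ᗮ V) (pn (pr 𝔨ᗮ W)))
        - pr 𝔨ᗮ (br (pn (pr 𝔨ᗮ V)) (pr 𝔨ᗮ W)))

/-- The extended curvature `Rm(P)(V₁,V₂).W` of the generalized submersion metric
`P = P_𝔱 ⊕ P_𝔫`: `Rm(P)(V₁,V₂) = ad([V₁,V₂]_𝔥)|_𝔪 - [S(P)(V₁),S(P)(V₂)] - S(P)([V₁,V₂]_𝔪)`. -/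
def Rmfun (𝔥 𝔨 : Submodule ℝ G) (pt pn pninv : G →L[ℝ] G) (V₁ V₂ W : G) : G :=
  br (pr 𝔥 (br V₁ V₂)) W
    - (Sfun br 𝔥 𝔨 pt pn pninv V₁ (Sfun br 𝔥 𝔨 pt pn pninv V₂ W)
        - Sfun br 𝔥 𝔨 pt pn pninv V₂ (Sfun br 𝔥 𝔨 pt pn pninv V₁ W))
    - Sfun br 𝔥 𝔨 pt pn pninv (pr 𝔥ᗮ (br V₁ V₂)) W

/-- `Tr (𝔪 ∋ Z ↦ Rm(P)(V₁, Z).V₂)`, computed via an orthonormal basis of `𝔪 = 𝔥ᗮ`. -/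
def RicBilin (𝔥 𝔨 : Submodule ℝ G) (pt pn pninv : G →L[ℝ] G) (V₁ V₂ : G) : ℝ :=
  ∑ i, ⟪((stdOrthonormalBasis ℝ 𝔥ᗮ) i : G),
        Rmfun br 𝔥 𝔨 pt pn pninv V₁ ((stdOrthonormalBasis ℝ 𝔥ᗮ) i : G) V₂⟫

/-- `Ric` is the extended Ricci endomorphism of the generalized submersion metric
`P = P_𝔱 ⊕ P_𝔫`: it maps `𝔪 = 𝔥ᗮ` to `𝔪`, vanishes on `𝔪ᗮ`, and satisfies
`Q(Ric.V₁, V₂) = Tr(𝔪 ∋ Z ↦ Rm(P)(V₁,Z).V₂)` for all `V₁, V₂ ∈ 𝔪`. -/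
def IsExtRic (𝔥 𝔨 : Submodule ℝ G) (pt pn pninv Ric : G →L[ℝ] G) : Prop :=
  Ric = (projL 𝔥ᗮ).comp (Ric.comp (projL 𝔥ᗮ)) ∧
  ∀ V₁ ∈ 𝔥ᗮ, ∀ V₂ ∈ 𝔥ᗮ, ⟪Ric V₁, V₂⟫ = RicBilin br 𝔥 𝔨 pt pn pninv V₁ V₂

/-- `SN` is the operator `S_N(P_𝔫)` of the base space `N`, relative to the reductive
decomposition `𝔤 = 𝔨 ⊕ 𝔫`, defined by the implicit equation
`-2 Q(S_N(X).Y, Z) = Q([X,Y]_𝔫, Z) + Q([P_𝔫⁻¹.Z, X]_𝔫, P_𝔫.Y) + Q([P_𝔫⁻¹.Z, Y]_𝔫, P_𝔫.X)`. -/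
def IsSN (𝔨 : Submodule ℝ G) (pn pninv : G →L[ℝ] G) (SN : G → G → G) : Prop :=
  (∀ X ∈ 𝔨ᗮ, ∀ Y ∈ 𝔨ᗮ, SN X Y ∈ 𝔨ᗮ) ∧
  ∀ X ∈ 𝔨ᗮ, ∀ Y ∈ 𝔨ᗮ, ∀ Z ∈ 𝔨ᗮ,
    (-2 : ℝ) * ⟪SN X Y, Z⟫ =
      ⟪pr 𝔨ᗮ (br X Y), Z⟫ + ⟪pr 𝔨ᗮ (br (pninv Z) X), pn Y⟫ + ⟪pr 𝔨ᗮ (br (pninv Z) Y), pn X⟫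

/-- The curvature `Rm_N(P_𝔫)(X,Y).W` of the base space `N`:
`Rm_N(X,Y) = ad([X,Y]_𝔨)|_𝔫 - [S_N(X),S_N(Y)] - S_N([X,Y]_𝔫)`. -/
def RmNfun (𝔨 : Submodule ℝ G) (SN : G → G → G) (X Y W : G) : G :=
  br (pr 𝔨 (br X Y)) W - (SN X (SN Y W) - SN Y (SN X W)) - SN (pr 𝔨ᗮ (br X Y)) W

/-- `RicN` is the Ricci endomorphism `Ric_N(P_𝔫)` of the base space `N`, relative to the
operator `SN = S_N(P_𝔫)`: it maps `𝔫 = 𝔨ᗮ` to `𝔫`, vanishes on `𝔫ᗮ`, and satisfies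
`Q(RicN.X, Y) = Tr(𝔫 ∋ Z ↦ Rm_N(X,Z).Y)` for all `X, Y ∈ 𝔫`. -/
def IsBaseRic (𝔨 : Submodule ℝ G) (SN : G → G → G) (RicN : G →L[ℝ] G) : Prop :=
  RicN = (projL 𝔨ᗮ).comp (RicN.comp (projL 𝔨ᗮ)) ∧
  ∀ X ∈ 𝔨ᗮ, ∀ Y ∈ 𝔨ᗮ,
    ⟪RicN X, Y⟫ = ∑ i, ⟪((stdOrthonormalBasis ℝ 𝔨ᗮ) i : G),
      RmNfun br 𝔨 SN X ((stdOrthonormalBasis ℝ 𝔨ᗮ) i : G) Y⟫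

section General

variable {E : Type*} [NormedAddCommGroup E] [InnerProductSpace ℝ E]

namespace IsLieQ

variable {b : E →ₗ[ℝ] E →ₗ[ℝ] E}

theorem bracket_swap (hb : IsLieQ b) (x y : E) : b x y = -b y x := by
  have h := hb.alt (x + y)
  simp only [map_add, LinearMap.add_apply, hb.alt x, hb.alt y, zero_add, add_zero] at h
  exact eq_neg_of_add_eq_zero_right h

theorem inner_bracket_rotate (hb : IsLieQ b) (x y z : E) : ⟪b x y, z⟫ = ⟪b z x, y⟫ := by
  have h := hb.adInv x y z
  have h' : ⟪y, b x z⟫ = -⟪b z x, y⟫ := by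
    rw [hb.bracket_swap x z, inner_neg_right, real_inner_comm]
  linarith

theorem bracket_mem_orthogonal (hb : IsLieQ b) {W : Submodule ℝ E}
    (hW : ∀ x ∈ W, ∀ y ∈ W, b x y ∈ W) {x y : E} (hx : x ∈ W) (hy : y ∈ Wᗮ) :
    b x y ∈ Wᗮ := by
  intro u hu
  have h := hb.adInv x u y
  have h' : ⟪b x u, y⟫ = 0 := hy _ (hW x hx u hu)
  linarith

end IsLieQ

theorem SymOn.of_invOn {W : Submodule ℝ E} {A Ainv : E →L[ℝ] E} (hA : SymOn W A)
    (hinv : InvOn' W A Ainv) : SymOn W Ainv := by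
  refine ⟨hinv.1, fun v hv w hw => ?_⟩
  calc ⟪Ainv v, w⟫ = ⟪Ainv v, A (Ainv w)⟫ := by rw [hinv.2.2 w hw]
    _ = ⟪A (Ainv v), Ainv w⟫ := (hA.2 _ (hinv.1 v hv) _ (hinv.1 w hw)).symm
    _ = ⟪v, Ainv w⟫ := by rw [hinv.2.2 v hv]

theorem Submodule.ext_inner_right {W : Submodule ℝ E} {u w : E} (hu : u ∈ W) (hw : w ∈ W)
    (h : ∀ z ∈ W, ⟪u, z⟫ = ⟪w, z⟫) : u = w := by
  refine sub_eq_zero.1 ((inner_self_eq_zero (𝕜 := ℝ)).1 ?_)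
  rw [inner_sub_left, h _ (W.sub_mem hu hw), sub_self]

theorem IsToralPair.bracket_eq_zero {b : E →ₗ[ℝ] E →ₗ[ℝ] E} {𝔥 𝔨 : Submodule ℝ E}
    (hLie : IsLieQ b) (hpair : IsToralPair b 𝔥 𝔨) {x T : E}
    (hx : x ∈ 𝔥) (hT : T ∈ 𝔨 ⊓ 𝔥ᗮ) : b x T = 0 := by
  have h : b x T ∈ 𝔥 ⊓ 𝔥ᗮ :=
    ⟨hpair.bk_in_h x (hpair.h_le_k hx) T hT.1, hLie.bracket_mem_orthogonal hpair.subalg_h hx hT.2⟩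
  rwa [Submodule.inf_orthogonal_eq_bot, Submodule.mem_bot] at h

end General

section Projections

variable {𝕜 E : Type*} [RCLike 𝕜] [NormedAddCommGroup E] [InnerProductSpace 𝕜 E]

theorem Submodule.starProjection_starProjection_of_le {U V : Submodule 𝕜 E}
    [U.HasOrthogonalProjection] [V.HasOrthogonalProjection] (h : U ≤ V) (x : E) :
    U.starProjection (V.starProjection x) = U.starProjection x :=
  DFunLike.congr_fun (U.starProjection_comp_starProjection_of_le h) x

theorem Submodule.starProjection_inf_orthogonal {U V : Submodule 𝕜 E}
    [U.HasOrthogonalProjection] [V.HasOrthogonalProjection] [(V ⊓ Uᗮ).HasOrthogonalProjection]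
    (h : U ≤ V) (x : E) :
    (V ⊓ Uᗮ).starProjection x = V.starProjection x - U.starProjection x := by
  refine Submodule.eq_starProjection_of_mem_orthogonal ⟨?_, ?_⟩ ?_
  · exact V.sub_mem (V.starProjection_apply_mem x) (h (U.starProjection_apply_mem x))
  · have hx : V.starProjection x - U.starProjection x
        = (x - U.starProjection x) - (x - V.starProjection x) := by abel
    rw [hx]
    exact Uᗮ.sub_mem (U.sub_starProjection_mem_orthogonal x)
      (Submodule.orthogonal_le h (V.sub_starProjection_mem_orthogonal x))
  · have hx : x - (V.starProjection x - U.starProjection x)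
        = (x - V.starProjection x) + U.starProjection x := by abel
    rw [hx]
    exact Submodule.add_mem _
      (Submodule.orthogonal_le inf_le_left (V.sub_starProjection_mem_orthogonal x))
      (Submodule.orthogonal_le inf_le_right
        (U.le_orthogonal_orthogonal (U.starProjection_apply_mem x)))

end Projections

section Collapsed

variable {br} {𝔥 𝔨 : Submodule ℝ G} {pn pninv : G →L[ℝ] G} {SN : G → G → G}

theorem pr_eq_starProjection (W : Submodule ℝ G) : pr W = W.starProjection := rfl

theorem IsSN.apply_eq (hLie : IsLieQ br) (hpn : SymOn 𝔨ᗮ pn) (hpninv : InvOn' 𝔨ᗮ pn pninv)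
    (hSN : IsSN br 𝔨 pn pninv SN) {X Y : G} (hX : X ∈ 𝔨ᗮ) (hY : Y ∈ 𝔨ᗮ) :
    SN X Y = -((2⁻¹ : ℝ) • 𝔨ᗮ.starProjection (br X Y))
      - (2⁻¹ : ℝ) • pninv (𝔨ᗮ.starProjection (br X (pn Y) - br (pn X) Y)) := by
  have hinv := hpn.of_invOn hpninv
  have inner_proj {u w : G} (hw : w ∈ 𝔨ᗮ) : ⟪𝔨ᗮ.starProjection u, w⟫ = ⟪u, w⟫ := by
    rw [Submodule.inner_starProjection_left_eq_right, Submodule.starProjection_eq_self_iff.2 hw]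
  have hRHS : -((2⁻¹ : ℝ) • 𝔨ᗮ.starProjection (br X Y))
      - (2⁻¹ : ℝ) • pninv (𝔨ᗮ.starProjection (br X (pn Y) - br (pn X) Y)) ∈ 𝔨ᗮ :=
    𝔨ᗮ.sub_mem (𝔨ᗮ.neg_mem (𝔨ᗮ.smul_mem _ (𝔨ᗮ.starProjection_apply_mem _)))
      (𝔨ᗮ.smul_mem _ (hpninv.1 _ (𝔨ᗮ.starProjection_apply_mem _)))
  refine Submodule.ext_inner_right (hSN.1 X hX Y hY) hRHS fun Z hZ => ?_
  have hSNZ := hSN.2 X hX Y hY Z hZ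
  simp only [pr_eq_starProjection, inner_proj hZ, inner_proj (hpn.1 X hX), inner_proj (hpn.1 Y hY)]
    at hSNZ
  have hXY : ⟪pninv (𝔨ᗮ.starProjection (br X (pn Y) - br (pn X) Y)), Z⟫
      = ⟪br (pninv Z) X, pn Y⟫ + ⟪br (pninv Z) Y, pn X⟫ := by
    rw [hinv.2 _ (𝔨ᗮ.starProjection_apply_mem _) _ hZ, inner_proj (hpninv.1 Z hZ), inner_sub_left,
      hLie.inner_bracket_rotate, hLie.bracket_swap (pn X), inner_neg_left,
      hLie.inner_bracket_rotate Y]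
    ring
  simp only [inner_sub_left, inner_neg_left, real_inner_smul_left, hXY, inner_proj hZ]
  linarith

theorem starProjection_Sfun_zero (hLie : IsLieQ br) (hpair : IsToralPair br 𝔥 𝔨)
    (hpn : SymOn 𝔨ᗮ pn) (hpninv : InvOn' 𝔨ᗮ pn pninv) (hSN : IsSN br 𝔨 pn pninv SN) (V W : G) :
    𝔨ᗮ.starProjection (Sfun br 𝔥 𝔨 0 pn pninv V W)
      = -br ((𝔨 ⊓ 𝔥ᗮ).starProjection V) (𝔨ᗮ.starProjection W)
        + SN (𝔨ᗮ.starProjection V) (𝔨ᗮ.starProjection W) := by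
  have hX := 𝔨ᗮ.starProjection_apply_mem V
  have hY := 𝔨ᗮ.starProjection_apply_mem W
  have hTY : br ((𝔨 ⊓ 𝔥ᗮ).starProjection V) (𝔨ᗮ.starProjection W) ∈ 𝔨ᗮ :=
    hLie.bracket_mem_orthogonal hpair.subalg_k ((𝔨 ⊓ 𝔥ᗮ).starProjection_apply_mem V).1 hY
  have hP := hpninv.1 _ (𝔨ᗮ.sub_mem (𝔨ᗮ.starProjection_apply_mem
    (br (𝔨ᗮ.starProjection V) (pn (𝔨ᗮ.starProjection W))))
    (𝔨ᗮ.starProjection_apply_mem (br (pn (𝔨ᗮ.starProjection V)) (𝔨ᗮ.starProjection W))))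
  simp only [Sfun, pr_eq_starProjection, zero_apply, map_zero,
    LinearMap.zero_apply, smul_zero, add_zero, sub_zero]
  rw [hSN.apply_eq hLie hpn hpninv hX hY, map_sub, map_sub, map_neg, map_smul, map_smul,
    Submodule.starProjection_eq_self_iff.2 hTY, Submodule.starProjection_eq_self_iff.2 hP,
    Submodule.starProjection_starProjection_of_le (Submodule.orthogonal_le hpair.h_le_k),
    map_sub 𝔨ᗮ.starProjection]
  abel

theorem Sfun_zero_eq_zero_of_mem (𝔥 : Submodule ℝ G) (pn pninv : G →L[ℝ] G) (V : G) {W : G}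
    (hW : W ∈ 𝔨) : Sfun br 𝔥 𝔨 0 pn pninv V W = 0 := by
  simp only [Sfun, pr_eq_starProjection, Submodule.starProjection_orthogonal_apply_eq_zero hW,
    map_zero, zero_apply, smul_zero, neg_zero, sub_zero, add_zero]

theorem Rmfun_zero_eq_zero_of_mem (hLie : IsLieQ br) (hpair : IsToralPair br 𝔥 𝔨) (pn pninv : G →L[ℝ] G)
    (V₁ V₂ : G) {T : G} (hT : T ∈ 𝔨 ⊓ 𝔥ᗮ) : Rmfun br 𝔥 𝔨 0 pn pninv V₁ V₂ T = 0 := by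
  have hS (V : G) : Sfun br 𝔥 𝔨 0 pn pninv V T = 0 := Sfun_zero_eq_zero_of_mem 𝔥 pn pninv V hT.1
  have hS₀ (V : G) : Sfun br 𝔥 𝔨 0 pn pninv V 0 = 0 := Sfun_zero_eq_zero_of_mem 𝔥 pn pninv V 𝔨.zero_mem
  rw [Rmfun, hS, hS, hS, hS₀, hS₀, pr_eq_starProjection,
    hpair.bracket_eq_zero hLie (𝔥.starProjection_apply_mem _) hT, sub_self, sub_zero, sub_zero]

theorem starProjection_Rmfun_zero (hLie : IsLieQ br) (hpair : IsToralPair br 𝔥 𝔨)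
    (hpn : SymOn 𝔨ᗮ pn) (hpninv : InvOn' 𝔨ᗮ pn pninv) (hSN : IsSN br 𝔨 pn pninv SN) {X Y Z : G}
    (hX : X ∈ 𝔨ᗮ) (hY : Y ∈ 𝔨ᗮ) (hZ : Z ∈ 𝔨ᗮ) :
    𝔨ᗮ.starProjection (Rmfun br 𝔥 𝔨 0 pn pninv X Y Z) = RmNfun br 𝔨 SN X Y Z := by
  have ht {v : G} (hv : v ∈ 𝔨ᗮ) : (𝔨 ⊓ 𝔥ᗮ).starProjection v = 0 :=
    (Submodule.starProjection_apply_eq_zero_iff _).2 (Submodule.orthogonal_le inf_le_left hv)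
  have hk {x : G} (hx : x ∈ 𝔨) : 𝔨ᗮ.starProjection (br x Z) = br x Z :=
    Submodule.starProjection_eq_self_iff.2 (hLie.bracket_mem_orthogonal hpair.subalg_k hx hZ)
  have htm : 𝔨 ⊓ 𝔥ᗮ ≤ 𝔥ᗮ := inf_le_right
  have hnm : 𝔨ᗮ ≤ 𝔥ᗮ := Submodule.orthogonal_le hpair.h_le_k
  simp only [Rmfun, RmNfun, pr_eq_starProjection, map_sub,
    starProjection_Sfun_zero hLie hpair hpn hpninv hSN, ht hX, ht hY,
    Submodule.starProjection_eq_self_iff.2 hX, Submodule.starProjection_eq_self_iff.2 hY,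
    Submodule.starProjection_eq_self_iff.2 hZ, Submodule.starProjection_starProjection_of_le htm,
    Submodule.starProjection_starProjection_of_le hnm, map_zero, LinearMap.zero_apply, neg_zero,
    zero_add, hk (hpair.h_le_k (𝔥.starProjection_apply_mem _)),
    Submodule.starProjection_inf_orthogonal hpair.h_le_k, LinearMap.sub_apply]
  abel

end Collapsed

theorem extRm_collapsed
    (hLie : IsLieQ br) (𝔥 𝔨 : Submodule ℝ G) (hpair : IsToralPair br 𝔥 𝔨)
    (pn pninv : G →L[ℝ] G)
    (hpn : SymOn 𝔨ᗮ pn)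
    (hpninv : InvOn' 𝔨ᗮ pn pninv)
    (SN : G → G → G) (hSN : IsSN br 𝔨 pn pninv SN) :
    (∀ T ∈ 𝔨 ⊓ 𝔥ᗮ, ∀ T' ∈ 𝔨 ⊓ 𝔥ᗮ, ∀ V ∈ 𝔥ᗮ,
        Rmfun br 𝔥 𝔨 0 pn pninv T V T' = 0) ∧
    (∀ X ∈ 𝔨ᗮ, ∀ T' ∈ 𝔨 ⊓ 𝔥ᗮ, ∀ V ∈ 𝔥ᗮ,
        Rmfun br 𝔥 𝔨 0 pn pninv X V T' = 0) ∧
    (∀ X ∈ 𝔨ᗮ, ∀ Y ∈ 𝔨ᗮ, ∀ Z ∈ 𝔨ᗮ,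
        pr 𝔨ᗮ (Rmfun br 𝔥 𝔨 0 pn pninv X Y Z) = RmNfun br 𝔨 SN X Y Z) :=
  ⟨fun T _ _ hT' V _ => Rmfun_zero_eq_zero_of_mem hLie hpair pn pninv T V hT',
    fun X _ _ hT' V _ => Rmfun_zero_eq_zero_of_mem hLie hpair pn pninv X V hT',
    fun _ hX _ hY _ hZ => starProjection_Rmfun_zero hLie hpair hpn hpninv hSN hX hY hZ⟩
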